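/- Let Ω be a Cantor group with a minimal translation T and identity element e. A topological group G is isomorphic (as a topological group) to hull(F(e)) for some f ∈ C(Ω,ℝ), where F(e) = (f(Tⁿ(e)))_{n∈ℤ}, if and only if G is isomorphic to a quotient of Ω by a closed subgroup. -/

import Mathlib

open BoundedContinuousFunction Filter

noncomputable def shiftk (k : ℤ) (d : ℤ →ᵇ ℝ) : ℤ →ᵇ ℝ :=
  d.compContinuous ⟨fun n => n + k, continuous_of_discreteTopology⟩

noncomputable def orb (d : ℤ →ᵇ ℝ) : Set (ℤ →ᵇ ℝ) := Set.range (fun k : ℤ => shiftk k d)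

noncomputable def hull (d : ℤ →ᵇ ℝ) : Set (ℤ →ᵇ ℝ) := closure (orb d)

def IsPeriodicPotential (p : ℤ →ᵇ ℝ) : Prop := (orb p).Finite

def IsLimitPeriodic (d : ℤ →ᵇ ℝ) : Prop :=
  d ∈ closure {p : ℤ →ᵇ ℝ | IsPeriodicPotential p}

noncomputable def shiftMem (d : ℤ →ᵇ ℝ) (k : ℤ) : ↥(hull d) :=
  ⟨shiftk k d, subset_closure ⟨k, rfl⟩⟩

noncomputable def hullId (d : ℤ →ᵇ ℝ) : ↥(hull d) :=
  ⟨d, subset_closure ⟨0, by ext n; simp [shiftk]⟩⟩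

noncomputable def freqModule (d : ℤ →ᵇ ℝ) : AddSubgroup ℝ :=
  AddSubgroup.closure {α : ℝ | ∃ L : ℂ, L ≠ 0 ∧
    Filter.Tendsto (fun n : ℕ => (1 / (2 * (n : ℂ))) *
      ∑ k ∈ Finset.Icc (-(n : ℤ)) (n : ℤ), (d k : ℂ) * Complex.exp (-(Complex.I) * k * α))
      Filter.atTop (nhds L)}

def IsFreqIntegerSet (d : ℤ →ᵇ ℝ) (S : Set ℕ) : Prop :=
  (∀ n ∈ S, 0 < n) ∧
  freqModule d = AddSubgroup.closure ((fun n : ℕ => 2 * Real.pi / (n : ℝ)) '' S)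

def CanonicalMul (d : ℤ →ᵇ ℝ) (m : ↥(hull d) → ↥(hull d) → ↥(hull d)) : Prop :=
  Continuous (fun p : ↥(hull d) × ↥(hull d) => m p.1 p.2) ∧
  ∀ k l : ℤ, m (shiftMem d k) (shiftMem d l) = shiftMem d (k + l)

def HullGroupIso (d e : ℤ →ᵇ ℝ) : Prop :=
  ∃ md me, CanonicalMul d md ∧ CanonicalMul e me ∧
    ∃ h : ↥(hull d) ≃ₜ ↥(hull e), ∀ x y, h (md x y) = me (h x) (h y)
variable {Ω : Type*} [TopologicalSpace Ω] [CommGroup Ω] [IsTopologicalGroup Ω] [CompactSpace Ω]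
  [TotallyDisconnectedSpace Ω]

/-- The translation `T(ω) = ω·a` is minimal: every `T`-orbit is dense. -/
def IsMinimalTranslation (a : Ω) : Prop :=
  ∀ ω : Ω, Dense (Set.range fun n : ℤ => ω * a ^ n)

/-- `Ω` has no isolated points. -/
def NoIsolatedPoints (Ω : Type*) [TopologicalSpace Ω] : Prop :=
  ∀ ω : Ω, Filter.NeBot (nhdsWithin ω {ω}ᶜ)

/-- `F(ω) = (f(Tⁿ(ω)))_{n ∈ ℤ}` where `T` is the translation by `a`. -/
noncomputable def sample (f : C(Ω, ℝ)) (a ω : Ω) : ℤ →ᵇ ℝ :=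
  (BoundedContinuousFunction.mkOfCompact f).compContinuous
    ⟨fun n : ℤ => ω * a ^ n, continuous_of_discreteTopology⟩

/-!
Minimality makes the orbit `k ↦ aᵏ` dense, so `ω ↦ F(ω)` maps the compact group `Ω` continuously
onto `hull (F(e))`, and `F(ω) = F(ω')` exactly when `ω⁻¹ω'` is a period of `f`. Hence the hull is
homeomorphic to `Ω ⧸ P` for the closed subgroup `P` of periods of `f`; as the powers of `a` are
dense on both sides, the canonical multiplication is the quotient multiplication.

Conversely, the closures of the subgroups generated by the powers `aᵐ` have finite index, hence
are open, and they form a neighbourhood basis of `1`; so `Ω` is first countable. For closed `N`,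
`1` is then a `G_δ` point of `Ω ⧸ N`, Urysohn gives `g` with `g⁻¹' {1} = {1}`, and `f = g ∘ π`
has period group exactly `N`.
-/

open scoped Topology

section DenseCyclicSubgroup

theorem finite_of_denseRange_zpow {Q : Type*} [Group Q] [TopologicalSpace Q] [T1Space Q] {b : Q}
    (hb : DenseRange (b ^ · : ℤ → Q)) (hfin : IsOfFinOrder b) : Finite Q := by
  have hrange : (Set.range (b ^ · : ℤ → Q)).Finite := by
    simpa only [← Subgroup.coe_zpowers] using hfin.finite_zpowers
  rw [← Set.finite_univ_iff, ← hb.closure_range, hrange.isClosed.closure_eq]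
  exact hrange

variable {Ω : Type*} [TopologicalSpace Ω] [CommGroup Ω] [IsTopologicalGroup Ω] {a : Ω}

theorem isOpen_topologicalClosure_zpowers_pow (ha : DenseRange (a ^ · : ℤ → Ω)) {m : ℕ}
    (hm : m ≠ 0) : IsOpen ((Subgroup.zpowers (a ^ m)).topologicalClosure : Set Ω) := by
  set C := (Subgroup.zpowers (a ^ m)).topologicalClosure
  have hC : IsClosed (C : Set Ω) := Subgroup.isClosed_topologicalClosure _
  have hfin : IsOfFinOrder (a : Ω ⧸ C) := by
    refine isOfFinOrder_iff_pow_eq_one.2 ⟨m, Nat.pos_of_ne_zero hm, ?_⟩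
    rw [← QuotientGroup.mk_pow, QuotientGroup.eq_one_iff]
    exact Subgroup.le_topologicalClosure _ (Subgroup.mem_zpowers _)
  have hdense : DenseRange ((a : Ω ⧸ C) ^ · : ℤ → Ω ⧸ C) := by
    simpa only [Function.comp_def, ← QuotientGroup.mk_zpow] using
      QuotientGroup.mk_surjective.denseRange.comp ha QuotientGroup.continuous_mk
  have := finite_of_denseRange_zpow hdense hfin
  have := C.finiteIndex_of_finite_quotient
  exact C.isOpen_of_isClosed_of_finiteIndex hC

theorem nhds_one_hasBasis_topologicalClosure_zpowers_pow [CompactSpace Ω]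
    [TotallyDisconnectedSpace Ω] (ha : DenseRange (a ^ · : ℤ → Ω)) :
    (𝓝 (1 : Ω)).HasBasis (fun m : ℕ => m ≠ 0)
      (fun m => ((Subgroup.zpowers (a ^ m)).topologicalClosure : Set Ω)) := by
  refine ⟨fun U => ⟨fun hU => ?_, fun ⟨m, hm, hmU⟩ => ?_⟩⟩
  · obtain ⟨H, hHU⟩ := ProfiniteGrp.exist_openNormalSubgroup_sub_open_nhds_of_one
      isOpen_interior (mem_interior_iff_mem_nhds.2 hU)
    have : H.toSubgroup.FiniteIndex := H.toSubgroup.finiteIndex_of_finite_quotient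
    refine ⟨H.toSubgroup.index, Subgroup.FiniteIndex.index_ne_zero, fun x hx => ?_⟩
    have hle : (Subgroup.zpowers (a ^ H.toSubgroup.index)).topologicalClosure ≤ H.toSubgroup :=
      Subgroup.topologicalClosure_minimal _
        (Subgroup.zpowers_le.2 (H.toSubgroup.pow_index_mem a)) H.isClosed
    exact interior_subset (hHU (hle hx))
  · exact Filter.mem_of_superset
      ((isOpen_topologicalClosure_zpowers_pow ha hm).mem_nhds (Subgroup.one_mem _)) hmU

theorem firstCountableTopology_of_denseRange_zpow [CompactSpace Ω] [TotallyDisconnectedSpace Ω]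
    (ha : DenseRange (a ^ · : ℤ → Ω)) : FirstCountableTopology Ω where
  nhds_generated_countable x := by
    have := (nhds_one_hasBasis_topologicalClosure_zpowers_pow ha).isCountablyGenerated
    rw [← map_mul_left_nhds_one x]
    infer_instance

end DenseCyclicSubgroup

section Periods

variable {Ω : Type*} [TopologicalSpace Ω] [CommGroup Ω]

def periodSubgroup (f : C(Ω, ℝ)) : Subgroup Ω where
  carrier := {p | ∀ x, f (p * x) = f x}
  one_mem' x := by rw [one_mul]
  mul_mem' {p q} hp hq x := by rw [mul_assoc, hp, hq]
  inv_mem' {p} hp x := by rw [← hp, mul_inv_cancel_left]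

theorem mem_periodSubgroup {f : C(Ω, ℝ)} {p : Ω} :
    p ∈ periodSubgroup f ↔ ∀ x, f (p * x) = f x :=
  Iff.rfl

variable [IsTopologicalGroup Ω]

theorem isClosed_periodSubgroup (f : C(Ω, ℝ)) : IsClosed (periodSubgroup f : Set Ω) := by
  simp only [SetLike.coe, periodSubgroup, Set.ofPred_forall]
  exact isClosed_iInter fun x => isClosed_eq (by fun_prop) continuous_const

theorem exists_periodSubgroup_eq [CompactSpace Ω] [FirstCountableTopology Ω] (N : Subgroup Ω)
    (hN : IsClosed (N : Set Ω)) : ∃ f : C(Ω, ℝ), periodSubgroup f = N := by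
  obtain ⟨g, hg, -⟩ := exists_continuous_one_zero_of_isCompact_of_isGδ isCompact_singleton
    (IsGδ.singleton (1 : Ω ⧸ N)) isClosed_empty (Set.disjoint_empty _)
  refine ⟨g.comp ⟨(↑), QuotientGroup.continuous_mk⟩,
    le_antisymm (fun p hp => ?_) fun p hp x => ?_⟩
  · have hg1 : g 1 = 1 := (hg.subset rfl :)
    have hp1 : (p : Ω ⧸ N) ∈ ({1} : Set (Ω ⧸ N)) := hg ▸ by simpa [hg1] using hp 1
    exact (QuotientGroup.eq_one_iff p).1 hp1
  · simp [(QuotientGroup.eq_one_iff p).2 hp]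

end Periods

theorem canonicalMul_iff {d : ℤ →ᵇ ℝ} {Q : Type*} [TopologicalSpace Q] [Group Q]
    [IsTopologicalGroup Q] (e : Q ≃ₜ hull d) {b : Q} (hb : DenseRange (b ^ · : ℤ → Q))
    (he : ∀ k : ℤ, e (b ^ k) = shiftMem d k) {m : hull d → hull d → hull d} :
    CanonicalMul d m ↔ ∀ u v, m (e u) (e v) = e (u * v) := by
  refine ⟨fun ⟨hcont, hshift⟩ u v => ?_, fun hm => ?_⟩
  · have hlhs : Continuous fun p : Q × Q => m (e p.1) (e p.2) :=
      hcont.comp ((e.continuous.comp continuous_fst).prodMk (e.continuous.comp continuous_snd))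
    have hrhs : Continuous fun p : Q × Q => e (p.1 * p.2) := by fun_prop
    refine congrFun (hlhs.ext_on (hb.prodMap hb) hrhs ?_) (u, v)
    rintro _ ⟨⟨k, l⟩, rfl⟩
    simp only [Prod.map, he, hshift, ← zpow_add]
  · have hm' : m = fun x y => e (e.symm x * e.symm y) := by
      ext1 x; ext1 y
      rw [← hm, e.apply_symm_apply, e.apply_symm_apply]
    subst hm'
    refine ⟨by fun_prop, fun k l => ?_⟩
    simp only [← he, e.symm_apply_apply, ← zpow_add]

section Sample

variable {Ω : Type*} [TopologicalSpace Ω] [CommGroup Ω] [CompactSpace Ω]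

theorem sample_apply (f : C(Ω, ℝ)) (a ω : Ω) (n : ℤ) : sample f a ω n = f (ω * a ^ n) := rfl

theorem shiftk_sample (f : C(Ω, ℝ)) (a ω : Ω) (k : ℤ) :
    shiftk k (sample f a ω) = sample f a (ω * a ^ k) := by
  ext n
  simp only [shiftk, compContinuous_apply, ContinuousMap.coe_mk, sample_apply, zpow_add,
    mul_assoc, mul_comm (a ^ n)]

variable [IsTopologicalGroup Ω]

theorem continuous_sample (f : C(Ω, ℝ)) (a : Ω) : Continuous (sample f a) := by
  -- `F(ω)` restricts the translate `f(ω · _)`, which depends continuously on `ω` in sup norm.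
  let translates : C(Ω, C(Ω, ℝ)) := (f.comp ⟨fun p : Ω × Ω => p.1 * p.2, continuous_mul⟩).curry
  let toBounded := ContinuousMap.isometryEquivBoundedOfCompact Ω ℝ
  change Continuous fun ω =>
    (toBounded (translates ω)).compContinuous ⟨(a ^ ·), continuous_of_discreteTopology⟩
  exact (continuous_compContinuous _).comp (toBounded.continuous.comp translates.continuous)

theorem hull_sample_one {a : Ω} (ha : DenseRange (a ^ · : ℤ → Ω)) (f : C(Ω, ℝ)) :
    hull (sample f a 1) = Set.range (sample f a) := by
  have horb : orb (sample f a 1) = sample f a '' Set.range (a ^ · : ℤ → Ω) := by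
    simp only [orb, shiftk_sample, one_mul, ← Set.range_comp, Function.comp_def]
  have hc := continuous_sample f a
  rw [hull, horb, hc.isClosedMap.closure_image_eq_of_continuous hc, ha.closure_range,
    Set.image_univ]

theorem sample_eq_sample_iff {a : Ω} (ha : DenseRange (a ^ · : ℤ → Ω)) (f : C(Ω, ℝ))
    (ω ω' : Ω) :
    sample f a ω = sample f a ω' ↔ (ω : Ω ⧸ periodSubgroup f) = ω' := by
  have htranslate : sample f a ω = sample f a ω' ↔ ∀ x, f (ω * x) = f (ω' * x) := by
    refine ⟨fun h => ?_, fun h => ext fun n => h _⟩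
    have hc : Continuous fun x => f (ω * x) := by fun_prop
    have hc' : Continuous fun x => f (ω' * x) := by fun_prop
    refine congrFun (hc.ext_on ha hc' ?_)
    rintro _ ⟨n, rfl⟩
    exact DFunLike.congr_fun h n
  rw [htranslate, QuotientGroup.eq, mem_periodSubgroup]
  refine ⟨fun h x => ?_, fun h x => ?_⟩
  · simpa [mul_comm ω⁻¹, mul_assoc] using (h (ω⁻¹ * x)).symm
  · simpa [mul_comm ω⁻¹, mul_assoc] using (h (ω * x)).symm

theorem exists_homeomorph_quotient_periodSubgroup_hull {a : Ω}
    (ha : DenseRange (a ^ · : ℤ → Ω)) (f : C(Ω, ℝ)) :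
    ∃ e : Ω ⧸ periodSubgroup f ≃ₜ hull (sample f a 1),
      ∀ m, CanonicalMul (sample f a 1) m ↔ ∀ u v, m (e u) (e v) = e (u * v) := by
  let φ : Ω ⧸ periodSubgroup f → hull (sample f a 1) :=
    Quotient.lift (fun ω => ⟨sample f a ω, hull_sample_one ha f ▸ Set.mem_range_self ω⟩)
      fun ω ω' h => Subtype.ext ((sample_eq_sample_iff ha f ω ω').2 (Quotient.sound h))
  have hφ : Function.Bijective φ := by
    refine ⟨fun u v huv => ?_, fun ⟨d, hd⟩ => ?_⟩
    · induction u using QuotientGroup.induction_on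
      induction v using QuotientGroup.induction_on
      exact (sample_eq_sample_iff ha f _ _).1 (congrArg Subtype.val huv)
    · obtain ⟨ω, rfl⟩ := (hull_sample_one ha f).subset hd
      exact ⟨ω, rfl⟩
  have hcont : Continuous φ := (QuotientGroup.isQuotientMap_mk _).continuous_iff.2
    ((continuous_sample f a).subtype_mk _)
  let e := hcont.homeoOfEquivCompactToT2 (f := Equiv.ofBijective φ hφ)
  have hdense : DenseRange ((a : Ω ⧸ periodSubgroup f) ^ · : ℤ → Ω ⧸ periodSubgroup f) := by
    simpa only [Function.comp_def, ← QuotientGroup.mk_zpow] using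
      QuotientGroup.mk_surjective.denseRange.comp ha QuotientGroup.continuous_mk
  refine ⟨e, fun m => canonicalMul_iff e hdense fun k => Subtype.ext ?_⟩
  rw [← QuotientGroup.mk_zpow]
  change sample f a (a ^ k) = shiftk k (sample f a 1)
  rw [shiftk_sample, one_mul]

end Sample

theorem statement_12_general {Ω : Type*} [TopologicalSpace Ω] [CommGroup Ω] [IsTopologicalGroup Ω]
    [CompactSpace Ω] [TotallyDisconnectedSpace Ω]
    (a : Ω) (hmin : IsMinimalTranslation a)
    (G : Type*) [TopologicalSpace G] [Group G] [IsTopologicalGroup G] :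
    (∃ f : C(Ω, ℝ), ∃ m, CanonicalMul (sample f a 1) m ∧
        ∃ h : ↥(hull (sample f a 1)) ≃ₜ G, ∀ x y, h (m x y) = h x * h y) ↔
    (∃ N : Subgroup Ω, IsClosed (N : Set Ω) ∧
        ∃ h : (Ω ⧸ N) ≃ₜ G, ∀ x y : Ω ⧸ N, h (x * y) = h x * h y) := by
  have ha : DenseRange (a ^ · : ℤ → Ω) := by simpa [DenseRange] using hmin 1
  constructor
  · rintro ⟨f, m, hm, h, hh⟩
    obtain ⟨e, he⟩ := exists_homeomorph_quotient_periodSubgroup_hull ha f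
    refine ⟨periodSubgroup f, isClosed_periodSubgroup f, e.trans h, fun u v => ?_⟩
    simp only [Homeomorph.trans_apply, ← (he m).1 hm, hh]
  · rintro ⟨N, hN, h, hh⟩
    have := firstCountableTopology_of_denseRange_zpow ha
    obtain ⟨f, rfl⟩ := exists_periodSubgroup_eq N hN
    obtain ⟨e, he⟩ := exists_homeomorph_quotient_periodSubgroup_hull ha f
    refine ⟨f, fun x y => e (e.symm x * e.symm y), (he _).2 fun u v => by simp,
      e.symm.trans h, fun x y => by simp [hh]⟩

/-- For a Cantor group `Ω` with a minimal translation (by `a`), a topological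
group `G` is isomorphic (as a topological group) to `hull (F(e))` for some `f ∈ C(Ω,ℝ)` iff `G`
is isomorphic to a quotient of `Ω` by a closed subgroup. -/
theorem statement_12 {Ω : Type*} [TopologicalSpace Ω] [CommGroup Ω] [IsTopologicalGroup Ω]
    [CompactSpace Ω] [TotallyDisconnectedSpace Ω] (hni : NoIsolatedPoints Ω)
    (a : Ω) (hmin : IsMinimalTranslation a)
    (G : Type*) [TopologicalSpace G] [Group G] [IsTopologicalGroup G] :
    (∃ f : C(Ω, ℝ), ∃ m, CanonicalMul (sample f a 1) m ∧
        ∃ h : ↥(hull (sample f a 1)) ≃ₜ G, ∀ x y, h (m x y) = h x * h y) ↔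
    (∃ N : Subgroup Ω, IsClosed (N : Set Ω) ∧
        ∃ h : (Ω ⧸ N) ≃ₜ G, ∀ x y : Ω ⧸ N, h (x * y) = h x * h y) :=
  statement_12_general a hmin G
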